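/- Let W be the category whose objects are finitely supported partial functions w : L ⇀ S (heap layouts, L countably infinite with a fixed bijection # : L ≅ ℕ) and whose morphisms are type-preserving injections. Given ρ₁ : w → w₁ and ρ₂ : w → w₂, the layout w ⊕ (w₁ ∖ img ρ₁) ⊕ (w₂ ∖ img ρ₂), together with the induced injections ρ₁•ρ₂ : w₁ → w ⊕ (w₁ ∖ img ρ₁) ⊕ (w₂ ∖ img ρ₂) and ρ₂•ρ₁ : w₂ → w ⊕ (w₁ ∖ img ρ₁) ⊕ (w₂ ∖ img ρ₂), makes the square commute: (ρ₁•ρ₂) ∘ ρ₁ = (ρ₂•ρ₁) ∘ ρ₂. -/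
import Mathlib


/-- A heap layout: a finitely supported partial function from locations to sorts. -/
def Layout (L S : Type*) : Type _ :=
  {w : L → Option S // Set.Finite {l | w l ≠ none}}

/-- The domain of a layout. -/
def Dom {L S : Type*} (w : Layout L S) : Set L := {l | w.1 l ≠ none}

/-- `ρ` is a morphism of layouts `w → w'`: a sort-preserving injection on domains. -/
def IsLayoutHom {L S : Type*} (w w' : Layout L S) (ρ : L → L) : Prop :=
  (∀ l s, w.1 l = some s → w'.1 (ρ l) = some s) ∧ Set.InjOn ρ (Dom w)

/-- Shift amount: one plus the largest index at which `w` is defined. -/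
noncomputable def shiftAmt {L S : Type*} (e : L ≃ ℕ) (w : Layout L S) : ℕ :=
  sSup {n | w.1 (e.symm n) ≠ none} + 1

/-- Tensor of layouts: `w'` is relabelled above the cells of `w` via `e`. -/
noncomputable def oplus {L S : Type*} (e : L ≃ ℕ) (w w' : Layout L S) :
    Layout L S := by
  classical
  refine ⟨fun l =>
    if (w.1 l).isSome then w.1 l
    else if shiftAmt e w ≤ e l then w'.1 (e.symm (e l - shiftAmt e w))
    else none, ?_⟩
  apply Set.Finite.subset
    (Set.Finite.union w.2 (Set.Finite.image (fun l => e.symm (e l + shiftAmt e w)) w'.2))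
  intro l hl
  simp only [Set.mem_setOf_eq] at hl
  by_cases h : (w.1 l).isSome
  · left
    simp only [Set.mem_setOf_eq]
    intro hn; rw [hn] at h; simp at h
  · right
    simp only [h, if_false] at hl
    by_cases h2 : shiftAmt e w ≤ e l
    · simp only [h2, if_true] at hl
      refine ⟨e.symm (e l - shiftAmt e w), hl, ?_⟩
      simp [Nat.sub_add_cancel h2]
    · simp [h2] at hl

/-- The sublayout of `w2` consisting of cells missed by `ρ : w1 → w2`. -/
noncomputable def ominus {L S : Type*} (w1 : Layout L S) (ρ : L → L)
    (w2 : Layout L S) : Layout L S := by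
  classical
  refine ⟨fun l => if ∃ l' ∈ Dom w1, ρ l' = l then none else w2.1 l, ?_⟩
  apply Set.Finite.subset w2.2
  intro l hl
  simp only [Set.mem_setOf_eq] at hl ⊢
  intro hn
  by_cases h : ∃ l' ∈ Dom w1, ρ l' = l
  · simp [h] at hl
  · simp [h, hn] at hl


section Helpers

variable {L S : Type*} (e : L ≃ ℕ)

lemma oplus_val (w w' : Layout L S) (l : L) :
    (oplus e w w').1 l =
      if (w.1 l).isSome then w.1 l
      else if shiftAmt e w ≤ e l then w'.1 (e.symm (e l - shiftAmt e w))
      else none := rfl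

open Classical in
lemma ominus_val (w1 : Layout L S) (ρ : L → L) (w2 : Layout L S) (l : L) :
    (ominus w1 ρ w2).1 l =
      if ∃ l' ∈ Dom w1, ρ l' = l then none else w2.1 l := rfl

lemma lt_shiftAmt {w : Layout L S} {l : L} (h : w.1 l ≠ none) :
    e l < shiftAmt e w := by
  have hfin : ({n | w.1 (e.symm n) ≠ none}).Finite := by
    apply (w.2.image e).subset
    intro n hn
    exact ⟨e.symm n, hn, by simp⟩
  have hmem : e l ∈ {n | w.1 (e.symm n) ≠ none} := by simp [h]
  have hle := le_csSup hfin.bddAbove hmem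
  unfold shiftAmt
  omega

lemma oplus_left {w : Layout L S} (w' : Layout L S) {l : L} (h : w.1 l ≠ none) :
    (oplus e w w').1 l = w.1 l := by
  rw [oplus_val]
  simp [Option.isSome_iff_ne_none, h]

lemma oplus_right (w w' : Layout L S) (l : L) :
    (oplus e w w').1 (e.symm (e l + shiftAmt e w)) = w'.1 l := by
  have hnone : w.1 (e.symm (e l + shiftAmt e w)) = none := by
    by_contra h
    have := lt_shiftAmt e h
    rw [Equiv.apply_symm_apply] at this
    omega
  rw [oplus_val]
  simp [hnone, Option.isSome_iff_ne_none]

end Helpers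

/-- Local independent coproducts in the category of heap layouts: given
`ρ₁ : w → w₁` and `ρ₂ : w → w₂`, the layout `w ⊕ (w₁ ∖ img ρ₁) ⊕ (w₂ ∖ img ρ₂)`
together with the induced injections `ρ₁•ρ₂` and `ρ₂•ρ₁` makes the square
commute: `(ρ₁•ρ₂) ∘ ρ₁ = (ρ₂•ρ₁) ∘ ρ₂` on the domain of `w`. -/
theorem local_independent_coproduct {L S : Type*} (e : L ≃ ℕ)
    (w w₁ w₂ : Layout L S) (ρ₁ ρ₂ : L → L)
    (h₁ : IsLayoutHom w w₁ ρ₁) (h₂ : IsLayoutHom w w₂ ρ₂) :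
    ∃ σ₁ σ₂ : L → L,
      IsLayoutHom w₁ (oplus e (oplus e w (ominus w ρ₁ w₁)) (ominus w ρ₂ w₂)) σ₁ ∧
      IsLayoutHom w₂ (oplus e (oplus e w (ominus w ρ₁ w₁)) (ominus w ρ₂ w₂)) σ₂ ∧
      ∀ l ∈ Dom w, σ₁ (ρ₁ l) = σ₂ (ρ₂ l) := by
  classical
  set A := oplus e w (ominus w ρ₁ w₁) with hA
  set W := oplus e A (ominus w ρ₂ w₂) with hW
  -- basic facts
  have hAw : ∀ c, w.1 c ≠ none → A.1 c = w.1 c := fun c hc => oplus_left e _ hc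
  have hAne : ∀ c ∈ Dom w, A.1 c ≠ none := by
    intro c hc
    rw [hAw c hc]; exact hc
  have hWA : ∀ c, A.1 c ≠ none → W.1 c = A.1 c := fun c hc => oplus_left e _ hc
  refine ⟨fun l => if h : ∃ l' ∈ Dom w, ρ₁ l' = l then h.choose
      else e.symm (e l + shiftAmt e w),
    fun l => if h : ∃ l' ∈ Dom w, ρ₂ l' = l then h.choose
      else e.symm (e l + shiftAmt e A), ?_, ?_, ?_⟩
  · constructor
    · intro l s hl
      by_cases h : ∃ l' ∈ Dom w, ρ₁ l' = l
      · simp only [dif_pos h]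
        obtain ⟨hc, hcρ⟩ := h.choose_spec
        obtain ⟨s', hs'⟩ := Option.ne_none_iff_exists'.1 hc
        have := h₁.1 _ _ hs'
        rw [hcρ, hl] at this
        have hss : s' = s := (Option.some.inj this).symm
        rw [hWA _ (hAne _ hc), hAw _ hc, hs', hss]
      · simp only [dif_neg h]
        have hAval : A.1 (e.symm (e l + shiftAmt e w)) = some s := by
          rw [hA, oplus_right, ominus_val, if_neg h, hl]
        rw [hWA _ (by rw [hAval]; simp), hAval]
    · intro x hx y hy hxy
      by_cases hx' : ∃ l' ∈ Dom w, ρ₁ l' = x <;>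
        by_cases hy' : ∃ l' ∈ Dom w, ρ₁ l' = y
      · simp only [dif_pos hx', dif_pos hy'] at hxy
        rw [← hx'.choose_spec.2, ← hy'.choose_spec.2, hxy]
      · simp only [dif_pos hx', dif_neg hy'] at hxy
        have h1 := lt_shiftAmt e (hx'.choose_spec.1 : w.1 _ ≠ none)
        have := congrArg e hxy
        simp only [Equiv.apply_symm_apply] at this
        omega
      · simp only [dif_neg hx', dif_pos hy'] at hxy
        have h1 := lt_shiftAmt e (hy'.choose_spec.1 : w.1 _ ≠ none)
        have := congrArg e hxy
        simp only [Equiv.apply_symm_apply] at this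
        omega
      · simp only [dif_neg hx', dif_neg hy'] at hxy
        have := congrArg e hxy
        simp only [Equiv.apply_symm_apply] at this
        exact e.injective (by omega)
  · constructor
    · intro l s hl
      by_cases h : ∃ l' ∈ Dom w, ρ₂ l' = l
      · simp only [dif_pos h]
        obtain ⟨hc, hcρ⟩ := h.choose_spec
        obtain ⟨s', hs'⟩ := Option.ne_none_iff_exists'.1 hc
        have := h₂.1 _ _ hs'
        rw [hcρ, hl] at this
        have hss : s' = s := (Option.some.inj this).symm
        rw [hWA _ (hAne _ hc), hAw _ hc, hs', hss]
      · simp only [dif_neg h]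
        rw [hW, oplus_right, ominus_val, if_neg h, hl]
    · intro x hx y hy hxy
      by_cases hx' : ∃ l' ∈ Dom w, ρ₂ l' = x <;>
        by_cases hy' : ∃ l' ∈ Dom w, ρ₂ l' = y
      · simp only [dif_pos hx', dif_pos hy'] at hxy
        rw [← hx'.choose_spec.2, ← hy'.choose_spec.2, hxy]
      · simp only [dif_pos hx', dif_neg hy'] at hxy
        have h1 := lt_shiftAmt e (hAne _ hx'.choose_spec.1)
        have := congrArg e hxy
        simp only [Equiv.apply_symm_apply] at this
        omega
      · simp only [dif_neg hx', dif_pos hy'] at hxy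
        have h1 := lt_shiftAmt e (hAne _ hy'.choose_spec.1)
        have := congrArg e hxy
        simp only [Equiv.apply_symm_apply] at this
        omega
      · simp only [dif_neg hx', dif_neg hy'] at hxy
        have := congrArg e hxy
        simp only [Equiv.apply_symm_apply] at this
        exact e.injective (by omega)
  · intro l hl
    have hex1 : ∃ l' ∈ Dom w, ρ₁ l' = ρ₁ l := ⟨l, hl, rfl⟩
    have hex2 : ∃ l' ∈ Dom w, ρ₂ l' = ρ₂ l := ⟨l, hl, rfl⟩
    simp only [dif_pos hex1, dif_pos hex2]
    rw [h₁.2 hex1.choose_spec.1 hl hex1.choose_spec.2,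
        h₂.2 hex2.choose_spec.1 hl hex2.choose_spec.2]
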